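/- Let E be a Hilbert C*-module over a unital C*-algebra satisfying property [H], C ∈ K(E), L = I − C, r the ascent of L, and P the orthogonal projection of E = Ker(L^r) ⊕ Ran(L^r) onto Ker(L^r). Then I − C − P = L − P is a bijection of E. -/

import Mathlib

set_option linter.unusedSectionVars false
set_option linter.unnecessarySimpa false
set_option linter.unusedVariables false
set_option maxHeartbeats 1000000


open scoped RightActions
open CStarModule Filter Topology

/-- The Hilbert C⋆-module class as Mathlib defined it in December 2024 (right `A`-action via
`Aᵐᵒᵖ`, inner product right-`A`-linear in the second argument). Mathlib's current `CStarModule`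
uses a left `A`-action instead, so the old class is restated here under a new name. -/
class OldCStarModule (A E : Type*) [NonUnitalSemiring A] [StarRing A] [Module ℂ A]
    [AddCommGroup E] [Module ℂ E] [PartialOrder A] [SMul Aᵐᵒᵖ E] [Norm A] [Norm E]
    extends Inner A E where
  inner_add_right {x} {y} {z} : inner x (y + z) = inner x y + inner x z
  inner_self_nonneg {x} : 0 ≤ inner x x
  inner_self {x} : inner x x = 0 ↔ x = 0
  inner_op_smul_right {a : A} {x y : E} : inner x (y <• a) = inner x y * a
  inner_smul_right_complex {z : ℂ} {x} {y} : inner x (z • y) = z • inner x y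
  star_inner x y : star (inner x y) = inner y x
  norm_eq_sqrt_norm_inner_self x : ‖x‖ = Real.sqrt ‖inner x x‖

section
variable (A E : Type*) [CStarAlgebra A] [PartialOrder A] [StarOrderedRing A]
  [NormedAddCommGroup E] [NormedSpace ℂ E] [Module Aᵐᵒᵖ E] [OldCStarModule A E]

/-- The rank-one operator predicate: `T = θ_{u,v}`, i.e. `T z = u⟪v, z⟫`. -/
def IsRankOne (T : E →L[ℂ] E) : Prop := ∃ u v : E, ∀ z, T z = u <• (inner (𝕜 := A) v z)

/-- The set `K(E)` of compact operators: the closure of the linear span of rank-one operators. -/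
def compactOp : Set (E →L[ℂ] E) :=
  closure (Submodule.span ℂ {T : E →L[ℂ] E | IsRankOne A E T} : Set (E →L[ℂ] E))

/-- Property [H]: every bounded sequence has a weakly convergent subsequence. -/
def PropertyH : Prop :=
  ∀ ζ : ℕ → E, Bornology.IsBounded (Set.range ζ) →
    ∃ φ : ℕ → ℕ, StrictMono φ ∧ ∃ z : E, ∀ v : E,
      Tendsto (fun k => inner (𝕜 := A) v (ζ (φ k))) atTop (nhds (inner (𝕜 := A) v z))

variable {A E}

lemma ocm_inner_sub_right {x y z : E} :
    inner (𝕜 := A) x (y - z) = inner (𝕜 := A) x y - inner (𝕜 := A) x z :=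
  map_sub (AddMonoidHom.mk' (fun y => inner (𝕜 := A) x y)
    (fun _ _ => OldCStarModule.inner_add_right)) y z

lemma ocm_inner_sub_left {x y z : E} :
    inner (𝕜 := A) (x - y) z = inner (𝕜 := A) x z - inner (𝕜 := A) y z := by
  rw [← OldCStarModule.star_inner z, ocm_inner_sub_right, star_sub,
    OldCStarModule.star_inner, OldCStarModule.star_inner]

lemma ocm_inner_zero_left {y : E} : inner (𝕜 := A) (0 : E) y = 0 := by
  have := ocm_inner_sub_left (A := A) (x := (0 : E)) (y := 0) (z := y)
  simpa using this

lemma ocm_inner_op_smul_left {a : A} {x y : E} :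
    inner (𝕜 := A) (x <• a) y = star a * inner (𝕜 := A) x y := by
  rw [← OldCStarModule.star_inner y, OldCStarModule.inner_op_smul_right, star_mul,
    OldCStarModule.star_inner]

lemma ocm_inner_smul_right_real {t : ℝ} {x y : E} :
    inner (𝕜 := A) x (t • y) = t • inner (𝕜 := A) x y := by
  have h1 : t • y = (t : ℂ) • y := (Complex.coe_smul t y).symm
  rw [h1, OldCStarModule.inner_smul_right_complex, Complex.coe_smul]

lemma ocm_inner_smul_left_real {t : ℝ} {x y : E} :
    inner (𝕜 := A) (t • x) y = t • inner (𝕜 := A) x y := by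
  rw [← OldCStarModule.star_inner y, ocm_inner_smul_right_real, star_smul, star_trivial,
    OldCStarModule.star_inner]

lemma ocm_norm_sq_eq {x : E} : ‖x‖ ^ 2 = ‖inner (𝕜 := A) x x‖ := by
  rw [OldCStarModule.norm_eq_sqrt_norm_inner_self (A := A) x, Real.sq_sqrt (norm_nonneg _)]

lemma ocm_inner_mul_inner_swap_le {x y : E} :
    inner (𝕜 := A) y x * inner (𝕜 := A) x y ≤ ‖x‖ ^ 2 • inner (𝕜 := A) y y := by
  rcases eq_or_ne x 0 with h | h
  · simp [h, ocm_inner_zero_left]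
  · have h₁ : ∀ (a : A),
        (0 : A) ≤ ‖x‖ ^ 2 • (star a * a) - ‖x‖ ^ 2 • (star a * inner (𝕜 := A) x y)
          - ‖x‖ ^ 2 • (inner (𝕜 := A) y x * a)
          + ‖x‖ ^ 2 • (‖x‖ ^ 2 • inner (𝕜 := A) y y) := fun a => by
      calc (0 : A) ≤ inner (𝕜 := A) (x <• a - ‖x‖ ^ 2 • y) (x <• a - ‖x‖ ^ 2 • y) := by
                      exact OldCStarModule.inner_self_nonneg
            _ = star a * inner (𝕜 := A) x x * a - ‖x‖ ^ 2 • (star a * inner (𝕜 := A) x y)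
                  - ‖x‖ ^ 2 • (inner (𝕜 := A) y x * a)
                  + ‖x‖ ^ 2 • (‖x‖ ^ 2 • inner (𝕜 := A) y y) := by
                      simp only [ocm_inner_sub_right, OldCStarModule.inner_op_smul_right,
                        ocm_inner_sub_left, ocm_inner_op_smul_left, ocm_inner_smul_left_real,
                        mul_sub, mul_smul_comm, ocm_inner_smul_right_real, smul_sub, mul_assoc, add_mul, sub_mul,
                        smul_mul_assoc]
                      abel
            _ ≤ ‖x‖ ^ 2 • (star a * a) - ‖x‖ ^ 2 • (star a * inner (𝕜 := A) x y)
                  - ‖x‖ ^ 2 • (inner (𝕜 := A) y x * a)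
                  + ‖x‖ ^ 2 • (‖x‖ ^ 2 • inner (𝕜 := A) y y) := by
                      gcongr
                      calc _ ≤ ‖inner (𝕜 := A) x x‖ • (star a * a) :=
                          CStarAlgebra.star_left_conjugate_le_norm_smul
                            (OldCStarModule.star_inner x x)
                        _ = ‖x‖ ^ 2 • (star a * a) := by rw [ocm_norm_sq_eq (A := A)]
    specialize h₁ (inner (𝕜 := A) x y)
    simp only [OldCStarModule.star_inner, sub_self, zero_sub, le_neg_add_iff_add_le,
      add_zero] at h₁
    rwa [smul_le_smul_iff_of_pos_left (pow_pos (norm_pos_iff.mpr h) _)] at h₁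

lemma ocm_norm_inner_le {x y : E} : ‖inner (𝕜 := A) x y‖ ≤ ‖x‖ * ‖y‖ := by
  have := calc ‖inner (𝕜 := A) x y‖ ^ 2
        = ‖inner (𝕜 := A) y x * inner (𝕜 := A) x y‖ := by
                rw [← OldCStarModule.star_inner x y, CStarRing.norm_star_mul_self, pow_two]
    _ ≤ ‖‖x‖ ^ 2 • inner (𝕜 := A) y y‖ := by
                refine CStarAlgebra.norm_le_norm_of_nonneg_of_le ?_ ocm_inner_mul_inner_swap_le
                rw [← OldCStarModule.star_inner x y]
                exact star_mul_self_nonneg _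
    _ = ‖x‖ ^ 2 * ‖inner (𝕜 := A) y y‖ := by simp [norm_smul]
    _ = ‖x‖ ^ 2 * ‖y‖ ^ 2 := by rw [← ocm_norm_sq_eq]
    _ = (‖x‖ * ‖y‖) ^ 2 := by rw [mul_pow]
  exact (pow_le_pow_iff_left₀ (norm_nonneg _) (by positivity) (by norm_num)).mp this

lemma ocm_continuous_inner_right (v : E) : Continuous (fun w : E => inner (𝕜 := A) v w) :=
  AddMonoidHomClass.continuous_of_bound (AddMonoidHom.mk' (fun y => inner (𝕜 := A) v y)
    (fun _ _ => OldCStarModule.inner_add_right)) ‖v‖ (fun w => ocm_norm_inner_le)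

lemma aux_norm_op_smul_le (x : E) (a : A) : ‖x <• a‖ ≤ ‖x‖ * ‖a‖ := by
  have h1 : inner (𝕜 := A) (x <• a) (x <• a) = star a * (inner (𝕜 := A) x x * a) := by
    rw [ocm_inner_op_smul_left, OldCStarModule.inner_op_smul_right]
  have h2 : ‖x <• a‖ ^ 2 ≤ (‖x‖ * ‖a‖) ^ 2 := by
    rw [ocm_norm_sq_eq (A := A), h1]
    calc ‖star a * (inner (𝕜 := A) x x * a)‖ ≤ ‖star a‖ * (‖inner (𝕜 := A) x x‖ * ‖a‖) :=
          norm_mul_le _ _ |>.trans (by gcongr; exact norm_mul_le _ _)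
      _ = ‖inner (𝕜 := A) x x‖ * (‖a‖ * ‖a‖) := by rw [norm_star]; ring
      _ ≤ ‖x‖ ^ 2 * (‖a‖ * ‖a‖) := by rw [← ocm_norm_sq_eq]
      _ = (‖x‖ * ‖a‖) ^ 2 := by ring
  exact (pow_le_pow_iff_left₀ (norm_nonneg _) (by positivity) (by norm_num)).mp h2

lemma aux_op_smul_sub (u : E) (a b : A) : u <• a - u <• b = u <• (a - b) := by
  show MulOpposite.op a • u - MulOpposite.op b • u = MulOpposite.op (a - b) • u
  rw [MulOpposite.op_sub, sub_smul]

lemma aux_compact_weak_to_norm {C : E →L[ℂ] E} (hC : C ∈ compactOp A E) {ζ : ℕ → E} {z : E}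
    {M : ℝ} (hM : ∀ k, ‖ζ k‖ ≤ M)
    (hw : ∀ v : E, Tendsto (fun k => inner (𝕜 := A) v (ζ k)) atTop
      (nhds (inner (𝕜 := A) v z))) :
    Tendsto (fun k => C (ζ k)) atTop (nhds (C z)) := by
  classical
  -- the set of operators mapping the weakly convergent sequence to a norm convergent one
  let S : Submodule ℂ (E →L[ℂ] E) :=
    { carrier := {T | Tendsto (fun k => T (ζ k)) atTop (nhds (T z))}
      add_mem' := fun {T U} hT hU => by
        simpa [ContinuousLinearMap.add_apply] using hT.add hU
      zero_mem' := by simp [tendsto_const_nhds]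
      smul_mem' := fun c T hT => by
        simpa [ContinuousLinearMap.smul_apply] using hT.const_smul c }
  have hspan : (Submodule.span ℂ {T : E →L[ℂ] E | IsRankOne A E T}) ≤ S := by
    rw [Submodule.span_le]
    rintro T ⟨u, v, hT⟩
    have h0 : Tendsto (fun k => inner (𝕜 := A) v (ζ k) - inner (𝕜 := A) v z) atTop (nhds 0) := by
      simpa using (hw v).sub_const (inner (𝕜 := A) v z)
    have h1 : Tendsto (fun k => T (ζ k) - T z) atTop (nhds 0) := by
      refine squeeze_zero_norm (fun k => ?_) (by simpa using (h0.norm.const_mul ‖u‖))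
      rw [hT, hT, aux_op_smul_sub]
      exact aux_norm_op_smul_le u _
    have := h1.add_const (T z)
    change Tendsto (fun k => T (ζ k)) atTop (nhds (T z))
    simpa using this
  -- pass to the closure by an ε/3 argument
  have hM0 : (0:ℝ) ≤ M := le_trans (norm_nonneg _) (hM 0)
  set B : ℝ := M + ‖z‖ + 1 with hBdef
  have hB : 0 < B := by positivity
  rw [Metric.tendsto_atTop]
  intro ε hε
  obtain ⟨T, hTmem, hTC⟩ : ∃ T ∈ (Submodule.span ℂ {T : E →L[ℂ] E | IsRankOne A E T} :
      Set (E →L[ℂ] E)), ‖C - T‖ < ε / (2 * B) := by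
    obtain ⟨T, hT1, hT2⟩ := Metric.mem_closure_iff.mp hC (ε / (2 * B)) (by positivity)
    exact ⟨T, hT1, by rwa [dist_eq_norm] at hT2⟩
  have hTt : Tendsto (fun k => T (ζ k)) atTop (nhds (T z)) := hspan hTmem
  obtain ⟨N, hN⟩ := Metric.tendsto_atTop.mp hTt (ε / 2) (by positivity)
  refine ⟨N, fun k hk => ?_⟩
  have h1 : ‖C (ζ k) - T (ζ k)‖ ≤ ‖C - T‖ * M := by
    calc ‖C (ζ k) - T (ζ k)‖ = ‖(C - T) (ζ k)‖ := by rw [ContinuousLinearMap.sub_apply]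
      _ ≤ ‖C - T‖ * ‖ζ k‖ := (C - T).le_opNorm _
      _ ≤ ‖C - T‖ * M := by gcongr; exact hM k
  have h2 : ‖T z - C z‖ ≤ ‖C - T‖ * ‖z‖ := by
    calc ‖T z - C z‖ = ‖(C - T) z‖ := by rw [ContinuousLinearMap.sub_apply, norm_sub_rev]
      _ ≤ ‖C - T‖ * ‖z‖ := (C - T).le_opNorm _
  have h3 : dist (T (ζ k)) (T z) < ε / 2 := hN k hk
  rw [dist_eq_norm] at h3 ⊢
  have hsplit : C (ζ k) - C z =
      (C (ζ k) - T (ζ k)) + (T (ζ k) - T z) + (T z - C z) := by abel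
  have hCT : ‖C - T‖ * (M + ‖z‖) ≤ ε / (2 * B) * B := by
    have h4 : ‖C - T‖ * (M + ‖z‖) ≤ ε / (2 * B) * (M + ‖z‖) := by
      apply mul_le_mul_of_nonneg_right hTC.le (by positivity)
    refine h4.trans ?_
    apply mul_le_mul_of_nonneg_left _ (by positivity)
    rw [hBdef]; linarith
  have hCB : ε / (2 * B) * B = ε / 2 := by field_simp
  calc ‖C (ζ k) - C z‖ ≤ ‖C (ζ k) - T (ζ k)‖ + ‖T (ζ k) - T z‖ + ‖T z - C z‖ := by
        rw [hsplit]; exact norm_add₃_le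
    _ ≤ ‖C - T‖ * M + ‖T (ζ k) - T z‖ + ‖C - T‖ * ‖z‖ := by gcongr
    _ < ‖C - T‖ * M + ε / 2 + ‖C - T‖ * ‖z‖ := by gcongr
    _ = ‖C - T‖ * (M + ‖z‖) + ε / 2 := by ring
    _ ≤ ε / (2 * B) * B + ε / 2 := by gcongr
    _ = ε := by rw [hCB]; ring

lemma aux_bounded_below (hH : PropertyH A E) {C : E →L[ℂ] E} (hC : C ∈ compactOp A E)
    (hinj : ∀ x : E, (1 - C) x = 0 → x = 0) :
    ∃ c : ℝ, 0 < c ∧ ∀ x : E, c * ‖x‖ ≤ ‖(1 - C) x‖ := by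
  by_contra h
  push_neg at h
  choose x hx using fun n : ℕ => h (1 / (n + 1)) (by positivity)
  have hxne : ∀ n, x n ≠ 0 := by
    intro n hn
    have := hx n
    rw [hn] at this
    simp at this
  set ζ : ℕ → E := fun n => ((‖x n‖⁻¹ : ℝ) : ℂ) • x n with hζdef
  have hζ1 : ∀ n, ‖ζ n‖ = 1 := by
    intro n
    have hpos : 0 < ‖x n‖ := norm_pos_iff.mpr (hxne n)
    rw [hζdef]
    simp only [norm_smul, Complex.norm_real, Real.norm_eq_abs, abs_of_nonneg (by positivity : (0:ℝ) ≤ ‖x n‖⁻¹)]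
    field_simp
  have hLζ : Tendsto (fun n => (1 - C) (ζ n)) atTop (nhds 0) := by
    refine squeeze_zero_norm (fun n => ?_) tendsto_one_div_add_atTop_nhds_zero_nat
    have hpos : 0 < ‖x n‖ := norm_pos_iff.mpr (hxne n)
    have : (1 - C) (ζ n) = ((‖x n‖⁻¹ : ℝ) : ℂ) • (1 - C) (x n) := map_smul _ _ _
    rw [this]
    simp only [norm_smul, Complex.norm_real, Real.norm_eq_abs,
      abs_of_nonneg (by positivity : (0:ℝ) ≤ ‖x n‖⁻¹)]
    calc ‖x n‖⁻¹ * ‖(1 - C) (x n)‖ ≤ ‖x n‖⁻¹ * (1 / (n + 1) * ‖x n‖) := by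
          gcongr
          exact (hx n).le
      _ = 1 / (n + 1) := by field_simp
  have hbdd : Bornology.IsBounded (Set.range ζ) := by
    refine isBounded_iff_forall_norm_le.mpr ⟨1, ?_⟩
    rintro _ ⟨n, rfl⟩
    exact (hζ1 n).le
  obtain ⟨φ, hφ, zz, hz⟩ := hH ζ hbdd
  have hCconv : Tendsto (fun k => C (ζ (φ k))) atTop (nhds (C zz)) :=
    aux_compact_weak_to_norm hC (M := 1) (fun k => (hζ1 _).le) (fun v => hz v)
  have hζconv : Tendsto (fun k => ζ (φ k)) atTop (nhds (C zz)) := by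
    have heq : ∀ k, ζ (φ k) = (1 - C) (ζ (φ k)) + C (ζ (φ k)) := by
      intro k
      simp [ContinuousLinearMap.sub_apply]
    have h' := (hLζ.comp hφ.tendsto_atTop).add hCconv
    rw [zero_add] at h'
    exact h'.congr (fun k => (heq k).symm)
  have hnorm : ‖C zz‖ = 1 := by
    have h1 : Tendsto (fun k => ‖ζ (φ k)‖) atTop (nhds ‖C zz‖) := hζconv.norm
    have h2 : Tendsto (fun k => ‖ζ (φ k)‖) atTop (nhds 1) := by
      simpa [hζ1] using tendsto_const_nhds (x := (1:ℝ)) (f := atTop (α := ℕ))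
    exact tendsto_nhds_unique h1 h2
  have hweak2 : ∀ v : E, Tendsto (fun k => inner (𝕜 := A) v (ζ (φ k))) atTop
      (nhds (inner (𝕜 := A) v (C zz))) := by
    intro v
    have := ((ocm_continuous_inner_right (A := A) v).tendsto (C zz)).comp hζconv
    exact this
  have hzCz : zz = C zz := by
    have heq : ∀ v : E, inner (𝕜 := A) v zz = inner (𝕜 := A) v (C zz) :=
      fun v => tendsto_nhds_unique (hz v) (hweak2 v)
    have h0 : inner (𝕜 := A) (zz - C zz) (zz - C zz) = 0 := by
      rw [ocm_inner_sub_right, heq (zz - C zz), sub_self]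
    rw [OldCStarModule.inner_self] at h0
    exact sub_eq_zero.mp h0
  have hLz : (1 - C) zz = 0 := by
    rw [ContinuousLinearMap.sub_apply, ContinuousLinearMap.one_apply, ← hzCz, sub_self]
  have hz0 : zz = 0 := hinj zz hLz
  rw [hz0, map_zero, norm_zero] at hnorm
  norm_num at hnorm

lemma aux_surj [CompleteSpace E] (hH : PropertyH A E) {C : E →L[ℂ] E} (hC : C ∈ compactOp A E)
    (hinj : ∀ x : E, (1 - C) x = 0 → x = 0) :
    Function.Surjective ⇑(1 - C : E →L[ℂ] E) := by
  classical
  set L : E →L[ℂ] E := 1 - C with hLdef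
  obtain ⟨c, hc, hbdd⟩ := aux_bounded_below hH hC hinj
  have hpow : ∀ (n : ℕ) (x : E), c ^ n * ‖x‖ ≤ ‖(L ^ n) x‖ := by
    intro n
    induction n with
    | zero => intro x; simp
    | succ n ih =>
      intro x
      have h1 : (L ^ (n + 1)) x = L ((L ^ n) x) := by
        rw [pow_succ', ContinuousLinearMap.mul_apply]
      rw [h1, pow_succ]
      calc c ^ n * c * ‖x‖ = c * (c ^ n * ‖x‖) := by ring
        _ ≤ c * ‖(L ^ n) x‖ := by gcongr; exact ih x
        _ ≤ ‖L ((L ^ n) x)‖ := hbdd _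
  have hcpos : ∀ n : ℕ, (0:ℝ) < c ^ n := fun n => pow_pos hc n
  have hinjn : ∀ n : ℕ, Function.Injective ⇑(L ^ n) := by
    intro n x y hxy
    have h1 : (L ^ n) (x - y) = 0 := by rw [map_sub, hxy, sub_self]
    have h2 := hpow n (x - y)
    rw [h1, norm_zero] at h2
    have h3 : ‖x - y‖ ≤ 0 := by nlinarith [hcpos n, norm_nonneg (x - y)]
    rw [← sub_eq_zero]
    exact norm_le_zero_iff.mp h3
  have hclosed : ∀ n : ℕ, IsClosed (Set.range ⇑(L ^ n)) := by
    intro n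
    have hK : ∀ x : E, ‖x‖ ≤ ((⟨(c ^ n)⁻¹, by positivity⟩ : NNReal) : ℝ) * ‖(L ^ n) x‖ := by
      intro x
      have h2 := hpow n x
      have h3 : (0:ℝ) < c ^ n := hcpos n
      show ‖x‖ ≤ (c ^ n)⁻¹ * ‖(L ^ n) x‖
      calc ‖x‖ = (c ^ n)⁻¹ * (c ^ n * ‖x‖) := by field_simp
        _ ≤ (c ^ n)⁻¹ * ‖(L ^ n) x‖ := by gcongr
    exact ((L ^ n).antilipschitz_of_bound hK).isClosed_range (L ^ n).uniformContinuous
  by_contra hsurj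
  simp only [Function.Surjective, not_forall, not_exists] at hsurj
  obtain ⟨y, hy⟩ := hsurj
  have hy' : y ∉ Set.range ⇑L := by rintro ⟨u, rfl⟩; exact hy u rfl
  set R : ℕ → Submodule ℂ E := fun n => LinearMap.range ((L ^ n : E →L[ℂ] E) : E →ₗ[ℂ] E) with hRdef
  have hRself : ∀ (n : ℕ) (w : E), w ∈ R n ↔ ∃ u, (L ^ n) u = w := by
    intro n w
    exact LinearMap.mem_range
  have hRclosed : ∀ n : ℕ, IsClosed ((R n : Submodule ℂ E) : Set E) := by
    intro n
    have : ((R n : Submodule ℂ E) : Set E) = Set.range ⇑(L ^ n) := by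
      ext w
      simp [hRself]
    rw [this]
    exact hclosed n
  have hRmono : ∀ m n : ℕ, m ≤ n → R n ≤ R m := by
    intro m n hmn w hw
    obtain ⟨u, hu⟩ := (hRself n w).mp hw
    refine (hRself m w).mpr ⟨(L ^ (n - m)) u, ?_⟩
    rw [← ContinuousLinearMap.mul_apply, ← pow_add, Nat.add_sub_cancel' hmn, hu]
  have hnotin : ∀ n : ℕ, (L ^ n) y ∉ R (n + 1) := by
    intro n hmem
    obtain ⟨u, hu⟩ := (hRself (n + 1) _).mp hmem
    have h1 : (L ^ n) (L u) = (L ^ n) y := by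
      rw [← ContinuousLinearMap.mul_apply, ← pow_succ]
      exact hu
    exact hy' ⟨u, hinjn n h1⟩
  have hexists : ∀ n : ℕ, ∃ x : E, x ∈ R n ∧ ‖x‖ = 1 ∧
      ∀ v ∈ R (n + 1), (1:ℝ)/2 ≤ ‖x - v‖ := by
    intro n
    set p : E := (L ^ n) y with hpdef
    have hpR : p ∈ R n := (hRself n p).mpr ⟨y, rfl⟩
    have hpnot : p ∉ ((R (n+1) : Submodule ℂ E) : Set E) := hnotin n
    have hne : ((R (n+1) : Submodule ℂ E) : Set E).Nonempty := ⟨0, Submodule.zero_mem _⟩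
    have hd : 0 < Metric.infDist p ((R (n+1) : Submodule ℂ E) : Set E) :=
      ((hRclosed (n+1)).notMem_iff_infDist_pos hne).1 hpnot
    set d : ℝ := Metric.infDist p ((R (n+1) : Submodule ℂ E) : Set E) with hddef
    obtain ⟨y₀, hy₀mem, hy₀⟩ := (Metric.infDist_lt_iff hne).1 (show d < 2*d by linarith)
    set w : E := p - y₀ with hwdef
    have hwn : d ≤ ‖w‖ := by
      have := Metric.infDist_le_dist_of_mem (x := p) hy₀mem
      rwa [dist_eq_norm] at this
    have hw2 : ‖w‖ < 2*d := by
      have := hy₀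
      rwa [dist_eq_norm] at this
    have hwpos : 0 < ‖w‖ := lt_of_lt_of_le hd hwn
    refine ⟨((‖w‖⁻¹ : ℝ) : ℂ) • w, ?_, ?_, ?_⟩
    · exact Submodule.smul_mem _ _ (Submodule.sub_mem _ hpR
        (hRmono n (n+1) (Nat.le_succ n) hy₀mem))
    · simp only [norm_smul, Complex.norm_real, Real.norm_eq_abs,
        abs_of_nonneg (by positivity : (0:ℝ) ≤ ‖w‖⁻¹)]
      field_simp
    · intro v hv
      have hmem2 : y₀ + ((‖w‖ : ℝ) : ℂ) • v ∈ ((R (n+1) : Submodule ℂ E) : Set E) :=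
        Submodule.add_mem _ hy₀mem (Submodule.smul_mem _ _ hv)
      have hkey : d ≤ ‖w - ((‖w‖ : ℝ) : ℂ) • v‖ := by
        have h1 := Metric.infDist_le_dist_of_mem (x := p) hmem2
        rw [dist_eq_norm] at h1
        calc d ≤ ‖p - (y₀ + ((‖w‖ : ℝ) : ℂ) • v)‖ := h1
          _ = ‖w - ((‖w‖ : ℝ) : ℂ) • v‖ := by rw [hwdef]; congr 1; abel
      have hcoef : ((‖w‖⁻¹ : ℝ) : ℂ) * ((‖w‖ : ℝ) : ℂ) = 1 := by
        rw [← Complex.ofReal_mul, inv_mul_cancel₀ (ne_of_gt hwpos)]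
        simp
      have heq2 : ((‖w‖⁻¹ : ℝ) : ℂ) • w - v = ((‖w‖⁻¹ : ℝ) : ℂ) • (w - ((‖w‖ : ℝ) : ℂ) • v) := by
        conv_rhs => rw [smul_sub, smul_smul]
        rw [hcoef, one_smul]
      rw [heq2]
      simp only [norm_smul, Complex.norm_real, Real.norm_eq_abs,
        abs_of_nonneg (by positivity : (0:ℝ) ≤ ‖w‖⁻¹)]
      have h5 : ‖w‖⁻¹ * d ≥ (2*d)⁻¹ * d := by
        gcongr
      have h6 : (2*d)⁻¹ * d = 1/2 := by field_simp
      calc (1:ℝ)/2 = (2*d)⁻¹ * d := h6.symm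
        _ ≤ ‖w‖⁻¹ * d := h5
        _ ≤ ‖w‖⁻¹ * ‖w - ((‖w‖ : ℝ) : ℂ) • v‖ := by gcongr
  choose xs hxR hx1 hgap using hexists
  have hbdd2 : Bornology.IsBounded (Set.range xs) := by
    refine isBounded_iff_forall_norm_le.mpr ⟨1, ?_⟩
    rintro _ ⟨n, rfl⟩
    exact (hx1 n).le
  obtain ⟨φ, hφ, z, hz⟩ := hH xs hbdd2
  have hCc : Tendsto (fun k => C (xs (φ k))) atTop (nhds (C z)) :=
    aux_compact_weak_to_norm hC (M := 1) (ζ := fun k => xs (φ k)) (fun k => (hx1 _).le)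
      (fun v => hz v)
  have hcauchy : CauchySeq (fun k => C (xs (φ k))) := hCc.cauchySeq
  obtain ⟨N, hN⟩ := Metric.cauchySeq_iff.1 hcauchy (1/2) (by norm_num)
  have h2 := hN N le_rfl (N + 1) (Nat.le_succ N)
  set n : ℕ := φ N with hndef
  set m : ℕ := φ (N + 1) with hmdef
  have hnm : n < m := hφ (Nat.lt_succ_self N)
  have hCsub : ∀ x : E, C x = x - L x := by
    intro x
    rw [hLdef, ContinuousLinearMap.sub_apply, ContinuousLinearMap.one_apply]
    abel
  have hdiff : C (xs n) - C (xs m) = xs n - (L (xs n) + xs m - L (xs m)) := by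
    rw [hCsub, hCsub]
    abel
  have hLxn : L (xs n) ∈ R (n + 1) := by
    obtain ⟨u, hu⟩ := (hRself n _).mp (hxR n)
    refine (hRself (n+1) _).mpr ⟨u, ?_⟩
    rw [pow_succ', ContinuousLinearMap.mul_apply, hu]
  have hxm : xs m ∈ R (n + 1) := hRmono (n + 1) m hnm (hxR m)
  have hLxm : L (xs m) ∈ R (n + 1) := by
    refine hRmono (n + 1) (m + 1) (by omega) ?_
    obtain ⟨u, hu⟩ := (hRself m _).mp (hxR m)
    refine (hRself (m+1) _).mpr ⟨u, ?_⟩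
    rw [pow_succ', ContinuousLinearMap.mul_apply, hu]
  have hvmem : L (xs n) + xs m - L (xs m) ∈ R (n + 1) :=
    Submodule.sub_mem _ (Submodule.add_mem _ hLxn hxm) hLxm
  have hge := hgap n _ hvmem
  rw [← hdiff] at hge
  rw [dist_eq_norm] at h2
  linarith

/-- with `L = I − C`, `r` the ascent of `L`, and `P` the projection of
`E = Ker(L^r) ⊕ Ran(L^r)` onto `Ker(L^r)`, the operator `I − C − P = L − P` is a bijection. -/
theorem stmt17 [CompleteSpace E] (hH : PropertyH A E) (C : E →L[ℂ] E) (hC : C ∈ compactOp A E)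
    (r : ℕ)
    (hr : ∀ x : E, ((1 - C) ^ (r + 1)) x = 0 ↔ ((1 - C) ^ r) x = 0)
    (hrmin : ∀ m < r, ¬ ∀ x : E, ((1 - C) ^ (m + 1)) x = 0 ↔ ((1 - C) ^ m) x = 0)
    (P : E →L[ℂ] E)
    (hP1 : ∀ x : E, ((1 - C) ^ r) (P x) = 0)
    (hP2 : ∀ x : E, x - P x ∈ Set.range ⇑((1 - C) ^ r))
    (hPsa : ∀ x y : E, inner (𝕜 := A) (P x) y = inner (𝕜 := A) x (P y)) :
    Function.Bijective ⇑(1 - C - P : E →L[ℂ] E) := by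
  classical
  set L : E →L[ℂ] E := 1 - C with hLdef
  have happ : ∀ (i j : ℕ) (x : E), (L ^ i) ((L ^ j) x) = (L ^ (i + j)) x := by
    intro i j x
    rw [← ContinuousLinearMap.mul_apply, ← pow_add]
  have hstep : ∀ (k : ℕ) (z : E), (L ^ (k + 1)) z = (L ^ k) (L z) := by
    intro k z
    rw [pow_succ, ContinuousLinearMap.mul_apply]
  have hstep' : ∀ (k : ℕ) (z : E), (L ^ (k + 1)) z = L ((L ^ k) z) := by
    intro k z
    rw [pow_succ', ContinuousLinearMap.mul_apply]
  have hfx : ∀ x : E, (1 - C - P) x = L x - P x := by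
    intro x
    rw [hLdef, ContinuousLinearMap.sub_apply]
  have hker : ∀ (k : ℕ) (x : E), (L ^ (r + k)) x = 0 ↔ (L ^ r) x = 0 := by
    intro k
    induction k with
    | zero => intro x; rfl
    | succ k ih =>
      intro x
      have e1 : (L ^ (r + (k + 1))) x = (L ^ (r + k)) (L x) := hstep (r + k) x
      have e2 : (L ^ r) (L x) = (L ^ (r + 1)) x := (hstep r x).symm
      rw [e1, ih (L x), e2]
      exact hr x
  have hKR : ∀ u : E, (L ^ r) ((L ^ r) u) = 0 → (L ^ r) u = 0 := by
    intro u hu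
    rw [happ] at hu
    exact (hker r u).mp hu
  have hPid : ∀ x : E, (L ^ r) x = 0 → P x = x := by
    intro x hx
    obtain ⟨u, hu⟩ := hP2 x
    have h1 : (L ^ r) ((L ^ r) u) = 0 := by
      rw [hu, map_sub, hx, hP1 x, sub_zero]
    have h2 := hKR u h1
    rw [hu] at h2
    exact (sub_eq_zero.mp h2).symm
  have hPR : ∀ u : E, P ((L ^ r) u) = 0 := by
    intro u
    obtain ⟨s, hs⟩ := hP2 ((L ^ r) u)
    have h1 : P ((L ^ r) u) = (L ^ r) (u - s) := by
      rw [map_sub, hs]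
      abel
    have h2 : (L ^ r) ((L ^ r) (u - s)) = 0 := by
      rw [← h1]
      exact hP1 _
    rw [h1, hKR _ h2]
  rcases Nat.eq_zero_or_pos r with hr0 | hrpos
  · -- case r = 0 : `P = 0`, and the conclusion is the Fredholm alternative
    subst hr0
    have hP0 : ∀ x : E, P x = 0 := by
      intro x
      have := hP1 x
      simpa using this
    have hinj0 : ∀ x : E, (1 - C) x = 0 → x = 0 := by
      intro x hx
      have h1 := (hr x).mp (by simpa [pow_one, ← hLdef] using hx)
      simpa using h1
    have hfun : ⇑(1 - C - P : E →L[ℂ] E) = ⇑(1 - C : E →L[ℂ] E) := by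
      funext x
      rw [hfx x, hP0 x, sub_zero, hLdef]
    rw [hfun]
    constructor
    · intro a b hab
      have h1 : (1 - C) (a - b) = 0 := by rw [map_sub, hab, sub_self]
      exact sub_eq_zero.mp (hinj0 _ h1)
    · exact aux_surj hH hC hinj0
  · -- case r = m + 1 : purely algebraic
    obtain ⟨m, rfl⟩ : ∃ m, r = m + 1 := ⟨r - 1, (Nat.succ_pred_eq_of_pos hrpos).symm⟩
    constructor
    · -- injectivity
      have hker0 : ∀ x : E, (1 - C - P) x = 0 → x = 0 := by
        intro x hx
        rw [hfx] at hx
        have hLx : L x = P x := sub_eq_zero.mp hx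
        obtain ⟨u, hu⟩ := hP2 x
        have e1 : P x - L (P x) = (L ^ (m + 1)) (L u) := by
          have h1 : P x - L (P x) = L (x - P x) := by
            rw [map_sub, ← hLx]
          rw [h1, ← hu, ← hstep' (m + 1) u, hstep (m + 1) u]
        have e2 : (L ^ (m + 1)) (P x - L (P x)) = 0 := by
          have h2 : (L ^ (m + 1)) (L (P x)) = 0 := by
            rw [← hstep (m + 1) (P x)]
            exact (hr (P x)).mpr (hP1 x)
          rw [map_sub, hP1 x, h2, sub_zero]
        have e3 : (L ^ (m + 1)) ((L ^ (m + 1)) (L u)) = 0 := by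
          rw [← e1]
          exact e2
        have e4 : P x - L (P x) = 0 := by
          rw [e1]
          exact hKR (L u) e3
        have hLa : L (P x) = P x := (sub_eq_zero.mp e4).symm
        have hfix : ∀ k : ℕ, (L ^ k) (P x) = P x := by
          intro k
          induction k with
          | zero => rfl
          | succ k ih =>
            calc (L ^ (k + 1)) (P x) = (L ^ k) (L (P x)) := hstep k (P x)
              _ = (L ^ k) (P x) := by rw [hLa]
              _ = P x := ih
        have hPx0 : P x = 0 := by
          rw [← hfix (m + 1)]
          exact hP1 x
        have hLx0 : L x = 0 := by rw [hLx, hPx0]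
        have hLrx : (L ^ (m + 1)) x = 0 := by
          rw [hstep m x, hLx0, map_zero]
        have := hPid x hLrx
        rw [hPx0] at this
        exact this.symm
      intro a b hab
      have h1 : (1 - C - P) (a - b) = 0 := by rw [map_sub, hab, sub_self]
      exact sub_eq_zero.mp (hker0 _ h1)
    · -- surjectivity
      intro y
      obtain ⟨u, hu⟩ := hP2 y
      have hGapp : (∑ j ∈ Finset.range (m + 1), (L : E →L[ℂ] E) ^ j) (P y)
          = ∑ j ∈ Finset.range (m + 1), (L ^ j) (P y) :=
        ContinuousLinearMap.sum_apply _ _ _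
      set g : E := ∑ j ∈ Finset.range (m + 1), (L ^ j) (P y) with hgdef
      have hLra : (L ^ (m + 1)) (P y) = 0 := hP1 y
      have hLg : L g - g = - P y := by
        have h := congrArg (fun T : E →L[ℂ] E => T (P y)) (mul_geom_sum L (m + 1))
        simp only [ContinuousLinearMap.mul_apply, ContinuousLinearMap.sub_apply,
          ContinuousLinearMap.one_apply, hGapp] at h
        rw [h, hLra, zero_sub]
      have hgK : (L ^ (m + 1)) g = 0 := by
        rw [hgdef, map_sum]
        refine Finset.sum_eq_zero fun j _ => ?_
        rw [happ, Nat.add_comm, ← happ, hLra, map_zero]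
      have hPg : P g = g := hPid g hgK
      have hf1 : (1 - C - P) (-g) = P y := by
        rw [hfx, map_neg, map_neg, hPg]
        have h3 : -(L g) - -g = -(L g - g) := by abel
        rw [h3, hLg, neg_neg]
      obtain ⟨t, ht⟩ := hP2 u
      have hw : (L ^ (m + 1)) ((L ^ (m + 1)) t) = y - P y := by
        rw [ht, map_sub, hu, hP1 u, sub_zero]
      have hLx₂ : L ((L ^ m) ((L ^ (m + 1)) t)) = y - P y := by
        rw [← hstep' m ((L ^ (m + 1)) t)]
        rw [happ, Nat.add_comm, ← happ] at hw ⊢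
        exact hw
      have hPx₂ : P ((L ^ m) ((L ^ (m + 1)) t)) = 0 := by
        have hx2' : (L ^ m) ((L ^ (m + 1)) t) = (L ^ (m + 1)) ((L ^ m) t) := by
          rw [happ, Nat.add_comm, ← happ]
        rw [hx2', hPR]
      refine ⟨-g + (L ^ m) ((L ^ (m + 1)) t), ?_⟩
      rw [map_add, hf1, hfx, hPx₂, sub_zero, hLx₂]
      abel


end
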